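/- Suppose the (6s,M)-th RICL constant of A ∈ C^{m×N} satisfies δ_{6s,M} < 1/√3, and let w be weights constant on levels. Then for all x ∈ C^N and e ∈ C^m, the IHTL sequence with input sparsities (2s,M), y = Ax + e, and x^{(0)} = 0 satisfies, for all n ≥ 0: ‖x − x^{(n)}‖₂ ≤ (E/√ξ) σ_{s,M}(x)_{ℓ¹_w} + F‖e‖₂ + ρⁿ‖x‖₂, where ρ = √3 δ_{6s,M} < 1, ξ = min_i (w^{(i)})² s_i, and E, F > 0 depend only on δ_{6s,M}. -/

import Mathlib

noncomputable section

open scoped BigOperators Classical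

namespace SIL

/-- The index set of level `k` (0-indexed): indices `i` with `M k ≤ i < M (k+1)`. -/
def level (N : ℕ) (M : ℕ → ℕ) (k : ℕ) : Finset (Fin N) :=
  Finset.univ.filter fun i => M k ≤ (i : ℕ) ∧ (i : ℕ) < M (k + 1)

/-- Validity of the sparsity levels `0 = M₀ < M₁ < ⋯ < M_r = N`. -/
def LevelsOK (N r : ℕ) (M : ℕ → ℕ) : Prop :=
  M 0 = 0 ∧ M r = N ∧ ∀ k < r, M k < M (k + 1)

/-- Support of a vector, as a finset. -/
def supp {N : ℕ} (x : Fin N → ℂ) : Finset (Fin N) :=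
  Finset.univ.filter fun i => x i ≠ 0

/-- An `(s,M)`-sparse index set: at most `s k` indices in each level `k`. -/
def SparseSet (N r : ℕ) (M s : ℕ → ℕ) (Δ : Finset (Fin N)) : Prop :=
  ∀ k < r, (Δ ∩ level N M k).card ≤ s k

/-- An `(s,M)`-sparse in levels vector. -/
def Sparse {N : ℕ} (r : ℕ) (M s : ℕ → ℕ) (x : Fin N → ℂ) : Prop :=
  SparseSet N r M s (supp x)

/-- Squared ℓ² norm. -/
def n2sq {ι : Type*} [Fintype ι] (x : ι → ℂ) : ℝ := ∑ i, ‖x i‖ ^ 2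

/-- ℓ² norm. -/
def n2 {ι : Type*} [Fintype ι] (x : ι → ℂ) : ℝ := Real.sqrt (n2sq x)

/-- Weighted ℓ¹ norm. -/
def wn1 {ι : Type*} [Fintype ι] (w : ι → ℝ) (x : ι → ℂ) : ℝ := ∑ i, w i * ‖x i‖

/-- Standard inner product `⟨x,y⟩ = ∑ xᵢ conj(yᵢ)`. -/
def inr {ι : Type*} [Fintype ι] (x y : ι → ℂ) : ℂ := ∑ i, x i * star (y i)

/-- Coordinate projection onto an index set. -/
def proj {N : ℕ} (Δ : Finset (Fin N)) (x : Fin N → ℂ) : Fin N → ℂ :=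
  fun i => if i ∈ Δ then x i else 0

/-- The two-sided restricted isometry-in-levels inequality with constant `δ`. -/
def RIPBound {m N : ℕ} (A : Matrix (Fin m) (Fin N) ℂ) (r : ℕ) (M s : ℕ → ℕ) (δ : ℝ) : Prop :=
  ∀ x : Fin N → ℂ, Sparse r M s x →
    (1 - δ) * n2sq x ≤ n2sq (A.mulVec x) ∧ n2sq (A.mulVec x) ≤ (1 + δ) * n2sq x

/-- The restricted isometry constant in levels `δ_{s,M}`: the smallest `δ ≥ 0`
satisfying the RIP-in-levels inequalities. -/
def ricl {m N : ℕ} (A : Matrix (Fin m) (Fin N) ℂ) (r : ℕ) (M s : ℕ → ℕ) : ℝ :=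
  sInf {δ : ℝ | 0 ≤ δ ∧ RIPBound A r M s δ}

/-- Best `(s,M)`-term approximation error in the weighted ℓ¹ norm. -/
def bestApprox {N : ℕ} (r : ℕ) (M s : ℕ → ℕ) (w : Fin N → ℝ) (x : Fin N → ℂ) : ℝ :=
  sInf {t : ℝ | ∃ z : Fin N → ℂ, Sparse r M s z ∧ t = wn1 w (x - z)}

/-- `ζ = ∑ₖ (w^{(k)})² sₖ`. -/
def zeta (r : ℕ) (s : ℕ → ℕ) (wl : ℕ → ℝ) : ℝ :=
  ∑ k ∈ Finset.range r, wl k ^ 2 * (s k : ℝ)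

/-- `ξ = minₖ (w^{(k)})² sₖ`. -/
def xiMin (r : ℕ) (s : ℕ → ℕ) (wl : ℕ → ℝ) : ℝ :=
  if h : (Finset.range r).Nonempty then (Finset.range r).inf' h fun k => wl k ^ 2 * (s k : ℝ)
  else 0

/-- `T` is a set collecting, within each level `k`, (the indices of) `s k`
largest-in-absolute-value entries of `z` (or all of the level if it is smaller). -/
def IsTopSet {N : ℕ} (r : ℕ) (M s : ℕ → ℕ) (z : Fin N → ℂ) (T : Finset (Fin N)) : Prop :=
  (∀ k < r, (T ∩ level N M k).card = min (s k) (level N M k).card) ∧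
  (∀ k < r, ∀ i ∈ T ∩ level N M k, ∀ j ∈ level N M k \ T, ‖z j‖ ≤ ‖z i‖)

/-- `h` is a hard thresholding in levels `H_{s,M}(z)` of `z`. -/
def IsThresh {N : ℕ} (r : ℕ) (M s : ℕ → ℕ) (z h : Fin N → ℂ) : Prop :=
  ∃ T : Finset (Fin N), IsTopSet r M s z T ∧ h = proj T z

/-- `X` is a sequence of IHTL iterates with data `(A, y)` and sparsities `(s, M)`. -/
def IHTLSeq {m N : ℕ} (A : Matrix (Fin m) (Fin N) ℂ) (r : ℕ) (M s : ℕ → ℕ)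
    (y : Fin m → ℂ) (X : ℕ → Fin N → ℂ) : Prop :=
  ∀ n, IsThresh r M s (X n + A.conjTranspose.mulVec (y - A.mulVec (X n))) (X (n + 1))

/-- `X` is a sequence of CoSaMPL iterates with data `(A, y)` and sparsities `(s, M)`. -/
def CoSaMPLSeq {m N : ℕ} (A : Matrix (Fin m) (Fin N) ℂ) (r : ℕ) (M s : ℕ → ℕ)
    (y : Fin m → ℂ) (X : ℕ → Fin N → ℂ) : Prop :=
  ∀ n, ∃ (T : Finset (Fin N)) (u : Fin N → ℂ),
    IsTopSet r M (fun k => 2 * s k) (A.conjTranspose.mulVec (y - A.mulVec (X n))) T ∧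
    supp u ⊆ supp (X n) ∪ T ∧
    (∀ z : Fin N → ℂ, supp z ⊆ supp (X n) ∪ T → n2 (y - A.mulVec u) ≤ n2 (y - A.mulVec z)) ∧
    IsThresh r M s u (X (n + 1))

section Aux
open Finset
variable {N m : ℕ}

lemma n2sq_nonneg {ι : Type*} [Fintype ι] (x : ι → ℂ) : 0 ≤ n2sq x :=
  Finset.sum_nonneg fun _ _ => sq_nonneg _

lemma n2_nonneg {ι : Type*} [Fintype ι] (x : ι → ℂ) : 0 ≤ n2 x := Real.sqrt_nonneg _

lemma n2_sq {ι : Type*} [Fintype ι] (x : ι → ℂ) : n2 x ^ 2 = n2sq x :=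
  Real.sq_sqrt (n2sq_nonneg x)

lemma n2_mono {ι : Type*} [Fintype ι] {x y : ι → ℂ} (h : n2sq x ≤ n2sq y) : n2 x ≤ n2 y :=
  Real.sqrt_le_sqrt h

def toE (x : Fin N → ℂ) : EuclideanSpace ℂ (Fin N) := WithLp.toLp 2 x

lemma n2_eq_norm (x : Fin N → ℂ) : n2 x = ‖toE x‖ := by
  rw [EuclideanSpace.norm_eq]; rfl

lemma n2_add_le (x y : Fin N → ℂ) : n2 (x + y) ≤ n2 x + n2 y := by
  rw [n2_eq_norm, n2_eq_norm, n2_eq_norm]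
  have h : toE (x + y) = toE x + toE y := by simp [toE]
  rw [h]; exact norm_add_le (toE x) (toE y)

lemma n2_sub_le (x y z : Fin N → ℂ) : n2 (x - z) ≤ n2 (x - y) + n2 (y - z) := by
  have : x - z = (x - y) + (y - z) := by abel
  rw [this]; exact n2_add_le _ _

lemma n2sq_proj (Δ : Finset (Fin N)) (x : Fin N → ℂ) :
    n2sq (proj Δ x) = ∑ i ∈ Δ, ‖x i‖ ^ 2 := by
  unfold n2sq proj
  have h1 : ∀ i ∈ Finset.univ (α := Fin N), ‖if i ∈ Δ then x i else 0‖ ^ 2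
      = if i ∈ Δ then ‖x i‖ ^ 2 else 0 := fun i _ => by
    by_cases h : i ∈ Δ <;> simp [h]
  rw [Finset.sum_congr rfl h1, Finset.sum_ite_mem, Finset.univ_inter]

lemma n2sq_proj_le (Δ : Finset (Fin N)) (x : Fin N → ℂ) : n2sq (proj Δ x) ≤ n2sq x := by
  rw [n2sq_proj]
  exact Finset.sum_le_sum_of_subset_of_nonneg (Finset.subset_univ Δ)
    (fun _ _ _ => sq_nonneg _)

lemma n2_proj_le (Δ : Finset (Fin N)) (x : Fin N → ℂ) : n2 (proj Δ x) ≤ n2 x :=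
  n2_mono (n2sq_proj_le Δ x)

lemma n2sq_proj_mono {Δ₁ Δ₂ : Finset (Fin N)} (h : Δ₁ ⊆ Δ₂) (x : Fin N → ℂ) :
    n2sq (proj Δ₁ x) ≤ n2sq (proj Δ₂ x) := by
  rw [n2sq_proj, n2sq_proj]
  exact Finset.sum_le_sum_of_subset_of_nonneg h (fun _ _ _ => sq_nonneg _)

lemma supp_proj_subset (Δ : Finset (Fin N)) (x : Fin N → ℂ) : supp (proj Δ x) ⊆ Δ := by
  intro i hi
  simp only [supp, Finset.mem_filter] at hi
  by_contra h
  exact hi.2 (by simp [proj, h])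

lemma proj_add (Δ : Finset (Fin N)) (x y : Fin N → ℂ) :
    proj Δ (x + y) = proj Δ x + proj Δ y := by
  funext i; by_cases h : i ∈ Δ <;> simp [proj, h]

lemma proj_sub (Δ : Finset (Fin N)) (x y : Fin N → ℂ) :
    proj Δ (x - y) = proj Δ x - proj Δ y := by
  funext i; by_cases h : i ∈ Δ <;> simp [proj, h]

lemma n2sq_neg (x : Fin N → ℂ) : n2sq (-x) = n2sq x := by
  unfold n2sq; simp

lemma n2sq_disj {a b : Fin N → ℂ} (h : ∀ i, a i = 0 ∨ b i = 0) :
    n2sq (a + b) = n2sq a + n2sq b := by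
  unfold n2sq
  rw [← Finset.sum_add_distrib]
  apply Finset.sum_congr rfl
  intro i _
  rcases h i with h' | h' <;> simp [h']

lemma mul_star_re (z : ℂ) : (z * star z).re = ‖z‖ ^ 2 := by
  rw [Complex.star_def, Complex.mul_conj, Complex.sq_norm]
  exact Complex.ofReal_re _

lemma inr_re_self {ι : Type*} [Fintype ι] (x : ι → ℂ) : (inr x x).re = n2sq x := by
  unfold inr n2sq
  rw [Complex.re_sum]
  exact Finset.sum_congr rfl fun i _ => mul_star_re _

lemma norm_sq_complex (u : ℂ) : ‖u‖ ^ 2 = u.re ^ 2 + u.im ^ 2 := by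
  rw [Complex.sq_norm, Complex.normSq_apply]; ring

lemma polar_term (z w : ℂ) : ‖z + w‖ ^ 2 - ‖z - w‖ ^ 2 = 4 * (z * star w).re := by
  simp only [norm_sq_complex, Complex.add_re, Complex.add_im, Complex.sub_re, Complex.sub_im,
    Complex.mul_re, Complex.star_def, Complex.conj_re, Complex.conj_im]
  ring

lemma parallel_term (z w : ℂ) : ‖z + w‖ ^ 2 + ‖z - w‖ ^ 2 = 2 * (‖z‖ ^ 2 + ‖w‖ ^ 2) := by
  simp only [norm_sq_complex, Complex.add_re, Complex.add_im, Complex.sub_re, Complex.sub_im]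
  ring

lemma polar (x y : Fin N → ℂ) : (inr x y).re = (n2sq (x + y) - n2sq (x - y)) / 4 := by
  unfold inr n2sq
  rw [Complex.re_sum, ← Finset.sum_sub_distrib]
  have : ∀ i ∈ Finset.univ (α := Fin N),
      ‖(x + y) i‖ ^ 2 - ‖(x - y) i‖ ^ 2 = 4 * (x i * star (y i)).re := fun i _ => by
    simpa using polar_term (x i) (y i)
  rw [Finset.sum_congr rfl this, ← Finset.mul_sum]
  ring

lemma parallel (x y : Fin N → ℂ) : n2sq (x + y) + n2sq (x - y) = 2 * (n2sq x + n2sq y) := by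
  unfold n2sq
  rw [← Finset.sum_add_distrib]
  have : ∀ i ∈ Finset.univ (α := Fin N),
      ‖(x + y) i‖ ^ 2 + ‖(x - y) i‖ ^ 2 = 2 * (‖x i‖ ^ 2 + ‖y i‖ ^ 2) := fun i _ => by
    simpa using parallel_term (x i) (y i)
  rw [Finset.sum_congr rfl this, ← Finset.mul_sum, Finset.sum_add_distrib]

lemma inr_sub_left {ι : Type*} [Fintype ι] (a b c : ι → ℂ) :
    inr (a - b) c = inr a c - inr b c := by
  unfold inr
  rw [← Finset.sum_sub_distrib]
  exact Finset.sum_congr rfl fun i _ => by simp [sub_mul]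

lemma inr_proj_self (Δ : Finset (Fin N)) (v : Fin N → ℂ) :
    inr (proj Δ v) (proj Δ v) = inr v (proj Δ v) := by
  unfold inr
  apply Finset.sum_congr rfl
  intro i _
  by_cases h : i ∈ Δ <;> simp [proj, h]

lemma inr_conjT (B : Matrix (Fin m) (Fin N) ℂ) (z : Fin m → ℂ) (g : Fin N → ℂ) :
    inr (B.conjTranspose.mulVec z) g = inr z (B.mulVec g) := by
  unfold inr
  simp only [Matrix.mulVec, dotProduct, Matrix.conjTranspose_apply, star_sum, star_mul',
    Finset.sum_mul, Finset.mul_sum]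
  rw [Finset.sum_comm]
  exact Finset.sum_congr rfl fun i _ => Finset.sum_congr rfl fun j _ => by ring

end Aux
section Aux2
open Finset
variable {N m r : ℕ} {M : ℕ → ℕ}

lemma M_mono (hM : LevelsOK N r M) {j k : ℕ} (hjk : j ≤ k) (hkr : k ≤ r) : M j ≤ M k := by
  induction k with
  | zero => have : j = 0 := Nat.le_zero.mp hjk; subst this; exact le_rfl
  | succ n ih =>
    rcases Nat.eq_or_lt_of_le hjk with h | h
    · subst h; exact le_rfl
    · have h1 : M j ≤ M n := ih (by omega) (by omega)
      have h2 : M n < M (n + 1) := hM.2.2 n (by omega)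
      omega

lemma mem_level_iff {i : Fin N} {k : ℕ} :
    i ∈ level N M k ↔ M k ≤ (i : ℕ) ∧ (i : ℕ) < M (k + 1) := by
  simp [level]

lemma exists_level (hM : LevelsOK N r M) (hr : 0 < r) (i : Fin N) :
    ∃ k < r, i ∈ level N M k := by
  have h0 : M 0 ≤ (i : ℕ) := by rw [hM.1]; exact Nat.zero_le _
  let P : ℕ → Prop := fun j => M j ≤ (i : ℕ)
  have hk1 : P (Nat.findGreatest P (r - 1)) := Nat.findGreatest_spec (Nat.zero_le _) h0
  have hkr : Nat.findGreatest P (r - 1) ≤ r - 1 := Nat.findGreatest_le _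
  refine ⟨Nat.findGreatest P (r - 1), lt_of_le_of_lt hkr (Nat.sub_lt hr one_pos), ?_⟩
  rw [mem_level_iff]
  refine ⟨hk1, ?_⟩
  by_cases h : Nat.findGreatest P (r - 1) + 1 = r
  · rw [h, hM.2.1]; exact i.isLt
  · have hgr : ¬ P (Nat.findGreatest P (r - 1) + 1) :=
      Nat.findGreatest_is_greatest (n := r - 1) (by omega) (by omega)
    have hgr' : ¬ M (Nat.findGreatest P (r - 1) + 1) ≤ (i : ℕ) := hgr
    omega

lemma level_disjoint (hM : LevelsOK N r M) {k k' : ℕ} (hk : k < r) (hk' : k' < r)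
    (hne : k ≠ k') : Disjoint (level N M k) (level N M k') := by
  rw [Finset.disjoint_left]
  intro i hi hi'
  rw [mem_level_iff] at hi hi'
  rcases lt_or_gt_of_ne hne with h | h
  · have : M (k + 1) ≤ M k' := M_mono hM (by omega) (by omega)
    omega
  · have : M (k' + 1) ≤ M k := M_mono hM (by omega) (by omega)
    omega

lemma eq_biUnion_levels (hM : LevelsOK N r M) (hr : 0 < r) (D : Finset (Fin N)) :
    D = (Finset.range r).biUnion fun k => D ∩ level N M k := by
  apply Finset.ext
  intro i
  simp only [Finset.mem_biUnion, Finset.mem_range, Finset.mem_inter]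
  constructor
  · intro hi
    obtain ⟨k, hk, hik⟩ := exists_level hM hr i
    exact ⟨k, hk, hi, hik⟩
  · rintro ⟨k, _, hi, _⟩; exact hi

lemma sum_levels (hM : LevelsOK N r M) (hr : 0 < r) (D : Finset (Fin N)) (f : Fin N → ℝ) :
    ∑ i ∈ D, f i = ∑ k ∈ Finset.range r, ∑ i ∈ D ∩ level N M k, f i := by
  conv_lhs => rw [eq_biUnion_levels hM hr D]
  apply Finset.sum_biUnion
  intro k hk k' hk' hne
  exact Finset.disjoint_of_subset_left (Finset.inter_subset_right)
    (Finset.disjoint_of_subset_right (Finset.inter_subset_right)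
      (level_disjoint hM (Finset.mem_range.mp hk) (Finset.mem_range.mp hk') hne))

lemma sum_dominated_le {s t : Finset (Fin N)} {g : Fin N → ℝ} (hg : ∀ j ∈ t, 0 ≤ g j)
    (hcard : s.card ≤ t.card) (hdom : ∀ i ∈ s, ∀ j ∈ t, g i ≤ g j) :
    ∑ i ∈ s, g i ≤ ∑ j ∈ t, g j := by
  rcases t.eq_empty_or_nonempty with h | ht
  · subst h
    simp only [Finset.card_empty, Nat.le_zero, Finset.card_eq_zero] at hcard
    subst hcard; simp
  · set mv := t.inf' ht g with hmv
    have hm0 : 0 ≤ mv := Finset.le_inf' ht g hg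
    have h1 : ∑ i ∈ s, g i ≤ s.card • mv :=
      Finset.sum_le_card_nsmul s g mv fun i hi => Finset.le_inf' ht g (hdom i hi)
    have h2 : t.card • mv ≤ ∑ j ∈ t, g j :=
      Finset.card_nsmul_le_sum t g mv fun j hj => Finset.inf'_le g hj
    have h3 : (s.card : ℝ) * mv ≤ (t.card : ℝ) * mv :=
      mul_le_mul_of_nonneg_right (Nat.cast_le.mpr hcard) hm0
    rw [nsmul_eq_mul] at h1 h2
    linarith

lemma exists_top (z : Fin N → ℂ) (c : ℕ) (L : Finset (Fin N)) :
    ∃ T, T ⊆ L ∧ T.card = min c L.card ∧ ∀ i ∈ T, ∀ j ∈ L \ T, ‖z j‖ ≤ ‖z i‖ := by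
  obtain ⟨T0, hT0L, hT0c⟩ := Finset.exists_subset_card_eq (min_le_right c L.card)
  obtain ⟨T, hTmem, hTmax⟩ := Finset.exists_max_image
      (L.powerset.filter fun T => T.card = min c L.card) (fun T => ∑ i ∈ T, ‖z i‖)
      ⟨T0, by simp [Finset.mem_filter, Finset.mem_powerset, hT0L, hT0c]⟩
  simp only [Finset.mem_filter, Finset.mem_powerset] at hTmem
  refine ⟨T, hTmem.1, hTmem.2, ?_⟩
  intro i hi j hj
  by_contra hlt
  push_neg at hlt
  have hjT : j ∉ T := (Finset.mem_sdiff.mp hj).2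
  have hjL : j ∈ L := (Finset.mem_sdiff.mp hj).1
  have hjTe : j ∉ T.erase i := fun h => hjT (Finset.mem_of_mem_erase h)
  have hcard : (insert j (T.erase i)).card = T.card := by
    rw [Finset.card_insert_of_notMem hjTe, Finset.card_erase_of_mem hi]
    have : 0 < T.card := Finset.card_pos.mpr ⟨i, hi⟩
    omega
  have hsub : insert j (T.erase i) ⊆ L :=
    Finset.insert_subset hjL ((Finset.erase_subset _ _).trans hTmem.1)
  have hmem' : insert j (T.erase i) ∈
      L.powerset.filter fun T => T.card = min c L.card := by
    simp only [Finset.mem_filter, Finset.mem_powerset]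
    exact ⟨hsub, by rw [hcard]; exact hTmem.2⟩
  have hle := hTmax _ hmem'
  have hsum : ∑ i' ∈ insert j (T.erase i), ‖z i'‖ = ‖z j‖ + (∑ i' ∈ T, ‖z i'‖ - ‖z i‖) := by
    rw [Finset.sum_insert hjTe, Finset.sum_erase_eq_sub hi]
  rw [hsum] at hle
  linarith

end Aux2
section Aux3
open Finset
variable {N m r : ℕ} {M t : ℕ → ℕ} {A : Matrix (Fin m) (Fin N) ℂ}

def frobsq (B : Matrix (Fin m) (Fin N) ℂ) : ℝ := ∑ i, ∑ j, ‖B i j‖ ^ 2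

lemma frobsq_nonneg (B : Matrix (Fin m) (Fin N) ℂ) : 0 ≤ frobsq B :=
  Finset.sum_nonneg fun _ _ => Finset.sum_nonneg fun _ _ => sq_nonneg _

lemma n2sq_mulVec_le (B : Matrix (Fin m) (Fin N) ℂ) (z : Fin N → ℂ) :
    n2sq (B.mulVec z) ≤ frobsq B * n2sq z := by
  unfold n2sq frobsq
  rw [Finset.sum_mul]
  apply Finset.sum_le_sum
  intro i _
  have h1 : ‖B.mulVec z i‖ ≤ ∑ j, ‖B i j‖ * ‖z j‖ := by
    simp only [Matrix.mulVec, dotProduct]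
    refine (norm_sum_le _ _).trans ?_
    exact le_of_eq (Finset.sum_congr rfl fun j _ => norm_mul _ _)
  have h2 : (∑ j, ‖B i j‖ * ‖z j‖) ^ 2 ≤ (∑ j, ‖B i j‖ ^ 2) * ∑ j, ‖z j‖ ^ 2 :=
    Finset.sum_mul_sq_le_sq_mul_sq _ _ _
  calc ‖B.mulVec z i‖ ^ 2 ≤ (∑ j, ‖B i j‖ * ‖z j‖) ^ 2 := by
        apply pow_le_pow_left₀ (norm_nonneg _) h1
    _ ≤ _ := h2

lemma n2_mulVec_le (B : Matrix (Fin m) (Fin N) ℂ) (z : Fin N → ℂ) :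
    n2 (B.mulVec z) ≤ Real.sqrt (frobsq B) * n2 z := by
  rw [n2, n2, ← Real.sqrt_mul (frobsq_nonneg B)]
  exact Real.sqrt_le_sqrt (n2sq_mulVec_le B z)

lemma frobsq_conjT (B : Matrix (Fin m) (Fin N) ℂ) : frobsq B.conjTranspose = frobsq B := by
  unfold frobsq
  rw [Finset.sum_comm]
  apply Finset.sum_congr rfl; intro i _
  apply Finset.sum_congr rfl; intro j _
  rw [Matrix.conjTranspose_apply, norm_star]

lemma ricl_set_nonempty {s : ℕ → ℕ} :
    {δ : ℝ | 0 ≤ δ ∧ RIPBound A r M s δ}.Nonempty := by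
  refine ⟨1 + frobsq A, by have := frobsq_nonneg A; linarith, ?_⟩
  intro x _
  have h1 := n2sq_mulVec_le A x
  have h2 := n2sq_nonneg x
  have h3 := n2sq_nonneg (A.mulVec x)
  have h4 := frobsq_nonneg A
  constructor <;> nlinarith

lemma ricl_mem (s : ℕ → ℕ) : 0 ≤ ricl A r M s ∧ RIPBound A r M s (ricl A r M s) := by
  have hclosed : IsClosed {δ : ℝ | 0 ≤ δ ∧ RIPBound A r M s δ} := by
    have heq : {δ : ℝ | 0 ≤ δ ∧ RIPBound A r M s δ} =
        Set.Ici 0 ∩ ⋂ (x : Fin N → ℂ) (_ : Sparse r M s x),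
          ({δ : ℝ | (1 - δ) * n2sq x ≤ n2sq (A.mulVec x)} ∩
           {δ : ℝ | n2sq (A.mulVec x) ≤ (1 + δ) * n2sq x}) := by
      ext δ
      simp only [Set.mem_inter_iff, Set.mem_setOf_eq, Set.mem_iInter, Set.mem_Ici, RIPBound]
    rw [heq]
    refine IsClosed.inter isClosed_Ici ?_
    refine isClosed_iInter fun x => isClosed_iInter fun _ => IsClosed.inter ?_ ?_
    · exact isClosed_le ((continuous_const.sub continuous_id).mul continuous_const)
        continuous_const
    · exact isClosed_le continuous_const
        ((continuous_const.add continuous_id).mul continuous_const)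
  have hmem := hclosed.csInf_mem (ricl_set_nonempty (s := s)) ⟨0, fun δ hδ => hδ.1⟩
  exact hmem

lemma sparse_of_supp_subset {s : ℕ → ℕ} {Ω : Finset (Fin N)} (hΩ : SparseSet N r M s Ω)
    {z : Fin N → ℂ} (hz : supp z ⊆ Ω) : Sparse r M s z := fun k hk =>
  le_trans (Finset.card_le_card (Finset.inter_subset_inter hz (subset_refl _))) (hΩ k hk)

end Aux3
section Aux4
open Finset
variable {N m r : ℕ} {M t : ℕ → ℕ} {A : Matrix (Fin m) (Fin N) ℂ} {δ : ℝ}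

lemma n2sq_eq_zero {x : Fin N → ℂ} (h : n2sq x = 0) : x = 0 := by
  funext i
  have h0 : ∀ j ∈ Finset.univ (α := Fin N), (0:ℝ) ≤ ‖x j‖ ^ 2 := fun _ _ => sq_nonneg _
  have h1 := (Finset.sum_eq_zero_iff_of_nonneg h0).mp h i (Finset.mem_univ i)
  have h2 : ‖x i‖ = 0 := by nlinarith [norm_nonneg (x i)]
  simpa using h2

lemma supp_add_subset (u v : Fin N → ℂ) : supp (u + v) ⊆ supp u ∪ supp v := by
  intro i hi
  simp only [supp, Finset.mem_filter, Finset.mem_univ, true_and, Finset.mem_union] at hi ⊢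
  by_contra h
  push_neg at h
  exact hi (by simp [Pi.add_apply, h.1, h.2])

lemma supp_sub_subset (u v : Fin N → ℂ) : supp (u - v) ⊆ supp u ∪ supp v := by
  intro i hi
  simp only [supp, Finset.mem_filter, Finset.mem_univ, true_and, Finset.mem_union] at hi ⊢
  by_contra h
  push_neg at h
  exact hi (by simp [Pi.sub_apply, h.1, h.2])

lemma supp_smul_subset (c : ℂ) (u : Fin N → ℂ) : supp (c • u) ⊆ supp u := by
  intro i hi
  simp only [supp, Finset.mem_filter, Finset.mem_univ, true_and] at hi ⊢
  intro h
  exact hi (by simp [Pi.smul_apply, h])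

lemma Q_bound (hrip : RIPBound A r M t δ) {u : Fin N → ℂ} (hu : Sparse r M t u) :
    |n2sq u - n2sq (A.mulVec u)| ≤ δ * n2sq u := by
  obtain ⟨h1, h2⟩ := hrip u hu
  rw [abs_le]
  constructor <;> linarith

lemma bilin_half (hrip : RIPBound A r M t δ) {Ω : Finset (Fin N)} (hΩ : SparseSet N r M t Ω)
    {u v : Fin N → ℂ} (hu : supp u ⊆ Ω) (hv : supp v ⊆ Ω) :
    |(inr u v).re - (inr (A.mulVec u) (A.mulVec v)).re| ≤ δ * (n2sq u + n2sq v) / 2 := by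
  have hp : supp (u + v) ⊆ Ω := (supp_add_subset u v).trans (Finset.union_subset hu hv)
  have hm : supp (u - v) ⊆ Ω := (supp_sub_subset u v).trans (Finset.union_subset hu hv)
  have q1 := Q_bound hrip (sparse_of_supp_subset hΩ hp)
  have q2 := Q_bound hrip (sparse_of_supp_subset hΩ hm)
  have e1 := polar u v
  have e2 := polar (A.mulVec u) (A.mulVec v)
  rw [← Matrix.mulVec_add, ← Matrix.mulVec_sub] at e2
  have par := parallel u v
  rw [abs_le] at q1 q2 ⊢
  have hpar2 : δ * n2sq (u + v) + δ * n2sq (u - v) = 2 * (δ * n2sq u) + 2 * (δ * n2sq v) := by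
    rw [← mul_add, par]; ring
  constructor <;> (obtain ⟨q11, q12⟩ := q1; obtain ⟨q21, q22⟩ := q2; linarith)

lemma n2sq_smul (c : ℝ) (u : Fin N → ℂ) : n2sq ((c:ℂ) • u) = c ^ 2 * n2sq u := by
  unfold n2sq
  rw [Finset.mul_sum]
  apply Finset.sum_congr rfl
  intro i _
  rw [Pi.smul_apply, smul_eq_mul, norm_mul, Complex.norm_real, mul_pow, Real.norm_eq_abs,
    sq_abs]

lemma inr_smul (c d : ℂ) (u v : Fin N → ℂ) :
    inr (c • u) (d • v) = c * star d * inr u v := by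
  unfold inr
  rw [Finset.mul_sum]
  apply Finset.sum_congr rfl
  intro i _
  simp only [Pi.smul_apply, smul_eq_mul, star_mul']
  ring

lemma n2_pos_of_ne {u : Fin N → ℂ} (h : ¬ n2sq u = 0) : 0 < n2 u := by
  rcases eq_or_lt_of_le (n2_nonneg u) with h' | h'
  · exfalso; apply h; rw [← n2_sq u, ← h']; ring
  · exact h'

lemma bilin_bound (hrip : RIPBound A r M t δ) (hδ0 : 0 ≤ δ)
    {Ω : Finset (Fin N)} (hΩ : SparseSet N r M t Ω)
    {u v : Fin N → ℂ} (hu : supp u ⊆ Ω) (hv : supp v ⊆ Ω) :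
    |(inr u v).re - (inr (A.mulVec u) (A.mulVec v)).re| ≤ δ * n2 u * n2 v := by
  by_cases hu0 : n2sq u = 0
  · rw [n2sq_eq_zero hu0]
    simp [inr, n2, n2sq, Matrix.mulVec_zero]
  by_cases hv0 : n2sq v = 0
  · rw [n2sq_eq_zero hv0]
    simp [inr, n2, n2sq, Matrix.mulVec_zero]
  have hu2 : 0 < n2 u := n2_pos_of_ne hu0
  have hv2 : 0 < n2 v := n2_pos_of_ne hv0
  have hdiv : 0 < n2 v / n2 u := div_pos hv2 hu2
  set c : ℝ := Real.sqrt (n2 v / n2 u) with hcdef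
  have hc : 0 < c := Real.sqrt_pos.mpr hdiv
  have hcsq : c ^ 2 = n2 v / n2 u := Real.sq_sqrt hdiv.le
  have hsu : supp ((c:ℂ) • u) ⊆ Ω := (supp_smul_subset _ _).trans hu
  have hsv : supp ((((c⁻¹ : ℝ)):ℂ) • v) ⊆ Ω := (supp_smul_subset _ _).trans hv
  have key := bilin_half hrip hΩ hsu hsv
  have hmul : (c:ℂ) * star (((c⁻¹:ℝ)):ℂ) = 1 := by
    rw [Complex.star_def, Complex.conj_ofReal, ← Complex.ofReal_mul,
      mul_inv_cancel₀ hc.ne', Complex.ofReal_one]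
  rw [Matrix.mulVec_smul, Matrix.mulVec_smul] at key
  rw [inr_smul, inr_smul, hmul, one_mul, one_mul] at key
  rw [n2sq_smul, n2sq_smul] at key
  have e1 : c ^ 2 * n2sq u = n2 v * n2 u := by
    rw [hcsq, ← n2_sq u]
    field_simp
  have e2 : (c⁻¹) ^ 2 * n2sq v = n2 u * n2 v := by
    rw [← n2_sq v, inv_pow, hcsq]
    field_simp
  rw [e1, e2] at key
  have : δ * (n2 v * n2 u + n2 u * n2 v) / 2 = δ * n2 u * n2 v := by ring
  rw [this] at key
  exact key

lemma restricted_bound (hrip : RIPBound A r M t δ) (hδ0 : 0 ≤ δ)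
    {Ω Δ : Finset (Fin N)} (hΩ : SparseSet N r M t Ω) (hΔ : Δ ⊆ Ω)
    {d : Fin N → ℂ} (hd : supp d ⊆ Ω) :
    n2 (proj Δ (d - A.conjTranspose.mulVec (A.mulVec d))) ≤ δ * n2 d := by
  set g : Fin N → ℂ := proj Δ (d - A.conjTranspose.mulVec (A.mulVec d)) with hgdef
  have hsupp : supp g ⊆ Ω := (supp_proj_subset _ _).trans hΔ
  have h0 : inr g g = inr (d - A.conjTranspose.mulVec (A.mulVec d)) g := by
    rw [hgdef]; exact inr_proj_self _ _
  have key : n2sq g = (inr d g).re - (inr (A.mulVec d) (A.mulVec g)).re := by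
    rw [← inr_re_self, h0, inr_sub_left, inr_conjT, Complex.sub_re]
  have hb := bilin_bound hrip hδ0 hΩ hd hsupp
  rw [abs_le] at hb
  have h1 : n2sq g ≤ δ * n2 d * n2 g := by linarith [hb.2, key.le, key.ge]
  rcases eq_or_lt_of_le (n2_nonneg g) with h | h
  · rw [← h]; exact mul_nonneg hδ0 (n2_nonneg d)
  · have h2 : n2 g * n2 g ≤ δ * n2 d * n2 g := by
      rw [← n2_sq g] at h1
      nlinarith [h1]
    exact le_of_mul_le_mul_right h2 h

end Aux4
section Aux5
open Finset
variable {N m r : ℕ} {M : ℕ → ℕ}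

lemma biUnion_inter_level (hM : LevelsOK N r M) {F : ℕ → Finset (Fin N)}
    (hF : ∀ j < r, F j ⊆ level N M j) {k : ℕ} (hk : k < r) :
    ((Finset.range r).biUnion F) ∩ level N M k = F k := by
  ext i
  simp only [Finset.mem_inter, Finset.mem_biUnion, Finset.mem_range]
  constructor
  · rintro ⟨⟨j, hj, hij⟩, hik⟩
    rcases eq_or_ne j k with rfl | hne
    · exact hij
    · exact absurd hik (Finset.disjoint_left.mp (level_disjoint hM hj hk hne) (hF j hj hij))
  · intro h
    exact ⟨⟨k, hk, h⟩, hF k hk h⟩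

lemma sparse_zero {s : ℕ → ℕ} : Sparse (N := N) r M s 0 := by
  intro k _
  have h : supp (0 : Fin N → ℂ) = ∅ := by simp [supp]
  rw [h, Finset.empty_inter, Finset.card_empty]
  exact Nat.zero_le _

lemma sum_sq_le_sq_sum {α : Type*} {s : Finset α} {f : α → ℝ} (hf : ∀ i ∈ s, 0 ≤ f i) :
    ∑ i ∈ s, f i ^ 2 ≤ (∑ i ∈ s, f i) ^ 2 := by
  induction s using Finset.induction with
  | empty => simp
  | @insert a s hna ih =>
    rw [Finset.sum_insert hna, Finset.sum_insert hna]
    have h1 : 0 ≤ f a := hf a (Finset.mem_insert_self a s)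
    have h2 : ∀ i ∈ s, 0 ≤ f i := fun i hi => hf i (Finset.mem_insert_of_mem hi)
    have h3 := ih h2
    have h4 : 0 ≤ ∑ i ∈ s, f i := Finset.sum_nonneg h2
    nlinarith

lemma xiMin_pos {s : ℕ → ℕ} {wl : ℕ → ℝ} (hr : 0 < r) (hs : ∀ k < r, 1 ≤ s k)
    (hwpos : ∀ k < r, 0 < wl k) : 0 < xiMin r s wl := by
  have hne : (Finset.range r).Nonempty := ⟨0, Finset.mem_range.mpr hr⟩
  rw [xiMin, dif_pos hne]
  rw [Finset.lt_inf'_iff]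
  intro k hk
  rw [Finset.mem_range] at hk
  have h1 := hwpos k hk
  have h2 : (1 : ℝ) ≤ (s k : ℝ) := by exact_mod_cast hs k hk
  nlinarith

lemma xiMin_le {s : ℕ → ℕ} {wl : ℕ → ℝ} (hr : 0 < r) {k : ℕ} (hk : k < r) :
    xiMin r s wl ≤ wl k ^ 2 * (s k : ℝ) := by
  have hne : (Finset.range r).Nonempty := ⟨0, Finset.mem_range.mpr hr⟩
  rw [xiMin, dif_pos hne]
  exact Finset.inf'_le _ (Finset.mem_range.mpr hk)

lemma exists_S {s : ℕ → ℕ} (hM : LevelsOK N r M) (hr : 0 < r) (hs : ∀ k < r, 1 ≤ s k)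
    (w : Fin N → ℝ) (wl : ℕ → ℝ) (hwpos : ∀ k < r, 0 < wl k)
    (hw : ∀ k < r, ∀ i ∈ level N M k, w i = wl k) (x : Fin N → ℂ) :
    ∃ S : Finset (Fin N),
      (∀ k < r, (S ∩ level N M k).card = min (2 * s k) (level N M k).card) ∧
      0 ≤ bestApprox r M s w x ∧
      n2 (x - proj S x) ≤ bestApprox r M s w x / Real.sqrt (xiMin r s wl) := by
  classical
  have hwnn : ∀ i : Fin N, 0 ≤ w i := by
    intro i
    obtain ⟨k, hk, hik⟩ := exists_level hM hr i
    rw [hw k hk i hik]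
    exact (hwpos k hk).le
  choose T1 hT1sub hT1card hT1dom using fun k => exists_top x (s k) (level N M k)
  choose T2 hT2sub hT2card hT2dom using fun k => exists_top x (s k) (level N M k \ T1 k)
  have hT2sub' : ∀ k < r, T2 k ⊆ level N M k := fun k _ =>
    (hT2sub k).trans (Finset.sdiff_subset)
  set S1 : Finset (Fin N) := (Finset.range r).biUnion T1 with hS1def
  set S : Finset (Fin N) := (Finset.range r).biUnion (fun k => T1 k ∪ T2 k) with hSdef
  have hS1L : ∀ k < r, S1 ∩ level N M k = T1 k := fun k hk =>
    biUnion_inter_level hM (fun j hj => hT1sub j) hk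
  have hSL : ∀ k < r, S ∩ level N M k = T1 k ∪ T2 k := fun k hk =>
    biUnion_inter_level hM (fun j hj => Finset.union_subset (hT1sub j) (hT2sub' j hj)) hk
  have hT12disj : ∀ k, Disjoint (T1 k) (T2 k) := by
    intro k
    rw [Finset.disjoint_left]
    intro i hi1 hi2
    exact (Finset.mem_sdiff.mp (hT2sub k hi2)).2 hi1
  have hT2card' : ∀ k, (T2 k).card = min (s k) ((level N M k).card - min (s k) (level N M k).card) := by
    intro k
    rw [hT2card k, Finset.card_sdiff_of_subset (hT1sub k), hT1card k]
  have hScard : ∀ k < r, (S ∩ level N M k).card = min (2 * s k) (level N M k).card := by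
    intro k hk
    rw [hSL k hk, Finset.card_union_of_disjoint (hT12disj k), hT1card k, hT2card' k]
    omega
  -- the tail quantities
  set g : Fin N → ℝ := fun i => w i * ‖x i‖ with hgdef
  have hgnn : ∀ i, 0 ≤ g i := fun i => mul_nonneg (hwnn i) (norm_nonneg _)
  set sig : ℝ := ∑ i ∈ Finset.univ \ S1, g i with hsigdef
  have hsignn : 0 ≤ sig := Finset.sum_nonneg fun i _ => hgnn i
  -- sigma ≤ bestApprox
  have hbest : sig ≤ bestApprox r M s w x := by
    unfold bestApprox
    have hne2 : {t : ℝ | ∃ z, Sparse r M s z ∧ t = wn1 w (x - z)}.Nonempty :=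
      ⟨wn1 w (x - 0), 0, sparse_zero, rfl⟩
    apply le_csInf hne2
    rintro t ⟨z, hz, rfl⟩
    have step1 : ∑ i ∈ Finset.univ \ supp z, g i ≤ wn1 w (x - z) := by
      rw [wn1]
      have h1 : ∑ i ∈ Finset.univ \ supp z, g i
          = ∑ i ∈ Finset.univ \ supp z, w i * ‖(x - z) i‖ := by
        apply Finset.sum_congr rfl
        intro i hi
        have hiz : z i = 0 := by
          by_contra h
          exact (Finset.mem_sdiff.mp hi).2 (by simp [supp, h])
        simp [hgdef, Pi.sub_apply, hiz]
      rw [h1]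
      apply Finset.sum_le_sum_of_subset_of_nonneg (Finset.sdiff_subset)
      intro i _ _
      exact mul_nonneg (hwnn i) (norm_nonneg _)
    have step2 : sig ≤ ∑ i ∈ Finset.univ \ supp z, g i := by
      rw [hsigdef, Finset.sum_sdiff_eq_sub (Finset.subset_univ _),
        Finset.sum_sdiff_eq_sub (Finset.subset_univ _)]
      have h2 : ∑ i ∈ supp z, g i ≤ ∑ i ∈ S1, g i := by
        rw [sum_levels hM hr (supp z) g, sum_levels hM hr S1 g]
        apply Finset.sum_le_sum
        intro k hk
        rw [Finset.mem_range] at hk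
        rw [hS1L k hk]
        set Z : Finset (Fin N) := supp z ∩ level N M k with hZdef
        have hZL : Z ⊆ level N M k := Finset.inter_subset_right
        have hZcard : Z.card ≤ (T1 k).card := by
          rw [hT1card k]
          have h3 : Z.card ≤ s k := hz k hk
          have h4 : Z.card ≤ (level N M k).card := Finset.card_le_card hZL
          omega
        have hmid : ∑ i ∈ Z \ T1 k, g i ≤ ∑ i ∈ T1 k \ Z, g i := by
          apply sum_dominated_le (fun j _ => hgnn j)
          · have c1 := Finset.card_sdiff_add_card_inter Z (T1 k)
            have c2 := Finset.card_sdiff_add_card_inter (T1 k) Z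
            rw [Finset.inter_comm] at c2
            omega
          · intro i hi j hj
            have hiZ := Finset.mem_sdiff.mp hi
            have hjT := Finset.mem_sdiff.mp hj
            have hij : ‖x i‖ ≤ ‖x j‖ :=
              hT1dom k j hjT.1 i (Finset.mem_sdiff.mpr ⟨hZL hiZ.1, hiZ.2⟩)
            have hwi : w i = wl k := hw k hk i (hZL hiZ.1)
            have hwj : w j = wl k := hw k hk j (hT1sub k hjT.1)
            rw [hgdef]
            simp only []
            rw [hwi, hwj]
            exact mul_le_mul_of_nonneg_left hij (hwpos k hk).le
        have e1 := Finset.sum_inter_add_sum_sdiff Z (T1 k) g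
        have e2 := Finset.sum_inter_add_sum_sdiff (T1 k) Z g
        have e3 : ∑ i ∈ Z ∩ T1 k, g i = ∑ i ∈ T1 k ∩ Z, g i := by rw [Finset.inter_comm]
        linarith
      linarith
    linarith
  -- Stechkin bound
  have hξpos : 0 < xiMin r s wl := xiMin_pos hr hs hwpos
  have hxs : x - proj S x = proj (Finset.univ \ S) x := by
    funext i
    by_cases h : i ∈ S <;> simp [proj, h]
  have hstech : n2sq (x - proj S x) ≤ sig ^ 2 / xiMin r s wl := by
    rw [hxs, n2sq_proj, sum_levels hM hr _ (fun i => ‖x i‖ ^ 2)]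
    have perlevel : ∀ k < r, ∑ i ∈ (Finset.univ \ S) ∩ level N M k, ‖x i‖ ^ 2
        ≤ (∑ i ∈ level N M k \ T1 k, g i) ^ 2 / xiMin r s wl := by
      intro k hk
      set W : ℝ := wl k with hWdef
      have hW : 0 < W := hwpos k hk
      set sk : ℝ := (s k : ℝ) with hskdef
      have hsk : (1:ℝ) ≤ sk := by rw [hskdef]; exact_mod_cast hs k hk
      set sgk : ℝ := ∑ i ∈ level N M k \ T1 k, g i with hsgkdef
      have hsgknn : 0 ≤ sgk := Finset.sum_nonneg fun i _ => hgnn i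
      set Dk : Finset (Fin N) := (Finset.univ \ S) ∩ level N M k with hDkdef
      have hDkL : Dk ⊆ level N M k := Finset.inter_subset_right
      have hDkS : ∀ i ∈ Dk, i ∉ S := by
        intro i hi
        exact (Finset.mem_sdiff.mp (Finset.mem_inter.mp hi).1).2
      rcases Dk.eq_empty_or_nonempty with hDk | hDk
      · rw [hDk]
        simp only [Finset.sum_empty]
        positivity
      · -- level is large: T2 k has exactly s k elements
        have hLcard : 2 * s k < (level N M k).card := by
          by_contra hcon
          push_neg at hcon
          obtain ⟨i0, hi0⟩ := hDk
          have h5 : (S ∩ level N M k).card = (level N M k).card := by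
            rw [hScard k hk]; omega
          have h6 : S ∩ level N M k = level N M k :=
            Finset.eq_of_subset_of_card_le Finset.inter_subset_right (by omega)
          have h7 : i0 ∈ S ∩ level N M k := by rw [h6]; exact hDkL hi0
          exact hDkS i0 hi0 (Finset.mem_inter.mp h7).1
        have hT2cardeq : (T2 k).card = s k := by
          rw [hT2card' k]; omega
        -- every tail entry is dominated by T2 entries
        have hdomT2 : ∀ i ∈ Dk, ∀ j ∈ T2 k, ‖x i‖ ≤ ‖x j‖ := by
          intro i hi j hj
          apply hT2dom k j hj i
          rw [Finset.mem_sdiff, Finset.mem_sdiff]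
          refine ⟨⟨hDkL hi, fun h => hDkS i hi ?_⟩, fun h => hDkS i hi ?_⟩
          · rw [hSdef]
            exact Finset.mem_biUnion.mpr ⟨k, Finset.mem_range.mpr hk, Finset.mem_union_left _ h⟩
          · rw [hSdef]
            exact Finset.mem_biUnion.mpr ⟨k, Finset.mem_range.mpr hk, Finset.mem_union_right _ h⟩
        have hbound : ∀ i ∈ Dk, W * sk * ‖x i‖ ≤ sgk := by
          intro i hi
          have h8 : sk * ‖x i‖ ≤ ∑ j ∈ T2 k, ‖x j‖ := by
            have := Finset.card_nsmul_le_sum (T2 k) (fun j => ‖x j‖) (‖x i‖)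
              (fun j hj => hdomT2 i hi j hj)
            rw [hT2cardeq, nsmul_eq_mul] at this
            exact_mod_cast this
          have h9 : W * ∑ j ∈ T2 k, ‖x j‖ ≤ sgk := by
            rw [Finset.mul_sum]
            have h10 : ∀ j ∈ T2 k, W * ‖x j‖ = g j := by
              intro j hj
              rw [hgdef]
              simp only []
              rw [hw k hk j (hT2sub' k hk hj)]
            rw [Finset.sum_congr rfl h10]
            apply Finset.sum_le_sum_of_subset_of_nonneg (hT2sub k)
            intro j _ _
            exact hgnn j
          calc W * sk * ‖x i‖ = W * (sk * ‖x i‖) := by ring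
            _ ≤ W * ∑ j ∈ T2 k, ‖x j‖ := mul_le_mul_of_nonneg_left h8 hW.le
            _ ≤ sgk := h9
        have hsum1 : ∑ i ∈ Dk, W * ‖x i‖ ≤ sgk := by
          have h11 : ∀ i ∈ Dk, W * ‖x i‖ = g i := by
            intro i hi
            rw [hgdef]
            simp only []
            rw [hw k hk i (hDkL hi)]
          rw [Finset.sum_congr rfl h11]
          apply Finset.sum_le_sum_of_subset_of_nonneg
          · intro i hi
            rw [Finset.mem_sdiff]
            refine ⟨hDkL hi, fun h => hDkS i hi ?_⟩
            rw [hSdef]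
            exact Finset.mem_biUnion.mpr ⟨k, Finset.mem_range.mpr hk, Finset.mem_union_left _ h⟩
          · intro j _ _
            exact hgnn j
        have key : ∀ i ∈ Dk, ‖x i‖ ^ 2 ≤ (sgk / (W ^ 2 * sk)) * (W * ‖x i‖) := by
          intro i hi
          have h1 := hbound i hi
          have h2 : (0:ℝ) ≤ ‖x i‖ := norm_nonneg _
          rw [div_mul_eq_mul_div, le_div_iff₀ (by positivity)]
          nlinarith [mul_le_mul_of_nonneg_right h1 (mul_nonneg hW.le h2)]
        calc ∑ i ∈ Dk, ‖x i‖ ^ 2 ≤ ∑ i ∈ Dk, (sgk / (W ^ 2 * sk)) * (W * ‖x i‖) :=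
              Finset.sum_le_sum key
          _ = (sgk / (W ^ 2 * sk)) * ∑ i ∈ Dk, W * ‖x i‖ := by rw [Finset.mul_sum]
          _ ≤ (sgk / (W ^ 2 * sk)) * sgk := by
              apply mul_le_mul_of_nonneg_left hsum1
              positivity
          _ = sgk ^ 2 / (W ^ 2 * sk) := by ring
          _ ≤ sgk ^ 2 / xiMin r s wl := by
              apply div_le_div_of_nonneg_left (sq_nonneg _) hξpos
              exact xiMin_le hr hk
    calc ∑ k ∈ Finset.range r, ∑ i ∈ (Finset.univ \ S) ∩ level N M k, ‖x i‖ ^ 2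
        ≤ ∑ k ∈ Finset.range r, (∑ i ∈ level N M k \ T1 k, g i) ^ 2 / xiMin r s wl := by
          apply Finset.sum_le_sum
          intro k hk
          exact perlevel k (Finset.mem_range.mp hk)
      _ = (∑ k ∈ Finset.range r, (∑ i ∈ level N M k \ T1 k, g i) ^ 2) / xiMin r s wl := by
          rw [Finset.sum_div]
      _ ≤ (∑ k ∈ Finset.range r, ∑ i ∈ level N M k \ T1 k, g i) ^ 2 / xiMin r s wl := by
          apply (div_le_div_iff_of_pos_right hξpos).mpr
          apply sum_sq_le_sq_sum
          intro k _
          exact Finset.sum_nonneg fun i _ => hgnn i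
      _ = sig ^ 2 / xiMin r s wl := by
          congr 1
          rw [hsigdef, sum_levels hM hr (Finset.univ \ S1) g]
          congr 1
          apply Finset.sum_congr rfl
          intro k hk
          rw [Finset.mem_range] at hk
          congr 1
          ext i
          simp only [Finset.mem_inter, Finset.mem_sdiff, Finset.mem_univ, true_and]
          constructor
          · rintro ⟨hiL, hiT1⟩
            refine ⟨fun h => hiT1 ?_, hiL⟩
            have h5 := hS1L k hk
            rw [← h5]
            exact Finset.mem_inter.mpr ⟨h, hiL⟩
          · rintro ⟨hiS1, hiL⟩
            refine ⟨hiL, fun h => hiS1 ?_⟩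
            rw [hS1def]
            exact Finset.mem_biUnion.mpr ⟨k, Finset.mem_range.mpr hk, h⟩
  refine ⟨S, hScard, le_trans hsignn hbest, ?_⟩
  have h12 : n2 (x - proj S x) ≤ Real.sqrt (sig ^ 2 / xiMin r s wl) :=
    Real.sqrt_le_sqrt hstech
  have h13 : Real.sqrt (sig ^ 2 / xiMin r s wl) = sig / Real.sqrt (xiMin r s wl) := by
    rw [Real.sqrt_div (sq_nonneg sig), Real.sqrt_sq hsignn]
  rw [h13] at h12
  have hsq : 0 < Real.sqrt (xiMin r s wl) := Real.sqrt_pos.mpr hξpos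
  exact le_trans h12 ((div_le_div_iff_of_pos_right hsq).mpr hbest)

end Aux5
section Aux6
open Finset
variable {N m r : ℕ} {M s : ℕ → ℕ} {A : Matrix (Fin m) (Fin N) ℂ} {δ : ℝ}

lemma n2_neg (b : Fin N → ℂ) : n2 (-b) = n2 b := by
  unfold n2; rw [n2sq_neg]

lemma n2_sub_le' (a b : Fin N → ℂ) : n2 (a - b) ≤ n2 a + n2 b := by
  rw [sub_eq_add_neg]
  refine (n2_add_le a (-b)).trans ?_
  rw [n2_neg]

lemma iter_core (hM : LevelsOK N r M) (hr : 0 < r)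
    (hrip : RIPBound A r M (fun k => 6 * s k) δ) (hδ0 : 0 ≤ δ)
    {S : Finset (Fin N)}
    (hScard : ∀ k < r, (S ∩ level N M k).card = min (2 * s k) (level N M k).card)
    (x : Fin N → ℂ) (e : Fin m → ℂ)
    {xn : Fin N → ℂ} (hxn : Sparse r M (fun k => 2 * s k) xn)
    {T : Finset (Fin N)}
    (hT : IsTopSet r M (fun k => 2 * s k)
      (xn + A.conjTranspose.mulVec ((A.mulVec x + e) - A.mulVec xn)) T) :
    n2 (proj S x - proj T (xn + A.conjTranspose.mulVec ((A.mulVec x + e) - A.mulVec xn)))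
      ≤ Real.sqrt 3 * δ * n2 (proj S x - xn)
        + Real.sqrt 3 * (Real.sqrt (frobsq A) * n2 (A.mulVec (x - proj S x) + e)) := by
  classical
  set u : Fin N → ℂ := xn + A.conjTranspose.mulVec ((A.mulVec x + e) - A.mulVec xn) with hudef
  set d : Fin N → ℂ := proj S x - xn with hddef
  set e' : Fin m → ℂ := A.mulVec (x - proj S x) + e with he'def
  set CA : ℝ := Real.sqrt (frobsq A) with hCAdef
  have hCA0 : 0 ≤ CA := Real.sqrt_nonneg _
  set Ω : Finset (Fin N) := (S ∪ supp xn) ∪ T with hΩdef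
  have hΩs : SparseSet N r M (fun k => 6 * s k) Ω := by
    intro k hk
    show (Ω ∩ level N M k).card ≤ 6 * s k
    have h1 : Ω ∩ level N M k
        ⊆ ((S ∩ level N M k) ∪ (supp xn ∩ level N M k)) ∪ (T ∩ level N M k) := by
      intro i hi
      rw [hΩdef] at hi
      simp only [Finset.mem_inter, Finset.mem_union] at hi ⊢
      tauto
    refine le_trans (Finset.card_le_card h1) ?_
    refine le_trans (Finset.card_union_le _ _) ?_
    have h2 := Finset.card_union_le (S ∩ level N M k) (supp xn ∩ level N M k)
    have h3 := hScard k hk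
    have h4 : (supp xn ∩ level N M k).card ≤ 2 * s k := hxn k hk
    have h5 : (T ∩ level N M k).card = min (2 * s k) (level N M k).card := hT.1 k hk
    omega
  have hTsub : T ⊆ Ω := Finset.subset_union_right
  have hSsub : S ⊆ Ω := Finset.subset_union_left.trans Finset.subset_union_left
  have hsd : supp d ⊆ Ω := by
    rw [hddef]
    refine (supp_sub_subset _ _).trans ?_
    refine Finset.union_subset ?_ ?_
    · exact (supp_proj_subset _ _).trans hSsub
    · exact (Finset.subset_union_right.trans Finset.subset_union_left :
        supp xn ⊆ Ω)
  set w1 : Fin N → ℂ := d - A.conjTranspose.mulVec (A.mulVec d) with hw1def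
  have hiden : proj S x - u = w1 - A.conjTranspose.mulVec e' := by
    rw [hudef, hw1def, hddef, he'def]
    have hy : (A.mulVec x + e) - A.mulVec xn
        = A.mulVec (proj S x - xn) + (A.mulVec (x - proj S x) + e) := by
      rw [Matrix.mulVec_sub, Matrix.mulVec_sub]
      abel
    rw [hy, Matrix.mulVec_add]
    abel
  have hrest : ∀ Δ : Finset (Fin N), Δ ⊆ Ω →
      n2 (proj Δ (proj S x - u)) ≤ δ * n2 d + CA * n2 e' := by
    intro Δ hΔ
    rw [hiden, proj_sub]
    refine (n2_sub_le' _ _).trans ?_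
    have h1 : n2 (proj Δ w1) ≤ δ * n2 d := restricted_bound hrip hδ0 hΩs hΔ hsd
    have h2 : n2 (proj Δ (A.conjTranspose.mulVec e')) ≤ CA * n2 e' := by
      refine (n2_proj_le _ _).trans ?_
      have h3 := n2_mulVec_le A.conjTranspose e'
      rwa [frobsq_conjT] at h3
    linarith
  have hv : proj S x - proj T u = proj T (proj S x - u) + proj (S \ T) (proj S x) := by
    funext i
    by_cases hiT : i ∈ T <;> by_cases hiS : i ∈ S <;>
      simp [proj, hiT, hiS, Finset.mem_sdiff, Pi.add_apply, Pi.sub_apply]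
  have hsplit : n2sq (proj S x - proj T u)
      = n2sq (proj T (proj S x - u)) + n2sq (proj (S \ T) (proj S x)) := by
    rw [hv]
    apply n2sq_disj
    intro i
    by_cases hiT : i ∈ T
    · right; simp [proj, Finset.mem_sdiff, hiT]
    · left; simp [proj, hiT]
  have hcount : n2sq (proj (S \ T) u) ≤ n2sq (proj (T \ S) u) := by
    rw [n2sq_proj, n2sq_proj, sum_levels hM hr (S \ T) _, sum_levels hM hr (T \ S) _]
    apply Finset.sum_le_sum
    intro k hk
    rw [Finset.mem_range] at hk
    have e1 : (S \ T) ∩ level N M k = (S ∩ level N M k) \ (T ∩ level N M k) := by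
      ext i; simp only [Finset.mem_sdiff, Finset.mem_inter]; tauto
    have e2 : (T \ S) ∩ level N M k = (T ∩ level N M k) \ (S ∩ level N M k) := by
      ext i; simp only [Finset.mem_sdiff, Finset.mem_inter]; tauto
    rw [e1, e2]
    apply sum_dominated_le (fun j _ => sq_nonneg _)
    · have c1 := Finset.card_sdiff_add_card_inter (S ∩ level N M k) (T ∩ level N M k)
      have c2 := Finset.card_sdiff_add_card_inter (T ∩ level N M k) (S ∩ level N M k)
      have c3 : ((S ∩ level N M k) ∩ (T ∩ level N M k)).card
          = ((T ∩ level N M k) ∩ (S ∩ level N M k)).card := by rw [Finset.inter_comm]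
      have c4 := hScard k hk
      have c5 : (T ∩ level N M k).card = min (2 * s k) (level N M k).card := hT.1 k hk
      omega
    · intro i hi j hj
      have hi' := Finset.mem_sdiff.mp hi
      have hj' := Finset.mem_sdiff.mp hj
      have hiL : i ∈ level N M k := (Finset.mem_inter.mp hi'.1).2
      have hiT : i ∉ T := fun h => hi'.2 (Finset.mem_inter.mpr ⟨h, hiL⟩)
      have hdom := hT.2 k hk j hj'.1 i (Finset.mem_sdiff.mpr ⟨hiL, hiT⟩)
      exact pow_le_pow_left₀ (norm_nonneg _) hdom 2
  have hTSu : n2sq (proj (T \ S) u) = n2sq (proj (T \ S) (proj S x - u)) := by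
    rw [n2sq_proj, n2sq_proj]
    apply Finset.sum_congr rfl
    intro i hi
    have hiS : i ∉ S := (Finset.mem_sdiff.mp hi).2
    have h6 : (proj S x - u) i = -u i := by
      simp [proj, hiS, Pi.sub_apply]
    rw [h6, norm_neg]
  set c : ℝ := δ * n2 d + CA * n2 e' with hcdef
  have hc0 : 0 ≤ c := by
    have h7 := mul_nonneg hδ0 (n2_nonneg d)
    have h8 := mul_nonneg hCA0 (n2_nonneg e')
    rw [hcdef]; linarith
  have hbT : n2 (proj T (proj S x - u)) ≤ c := hrest T hTsub
  have hdisjTS : Disjoint (T \ S) (S \ T) := by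
    rw [Finset.disjoint_left]
    intro i h1 h2
    exact (Finset.mem_sdiff.mp h1).2 (Finset.mem_sdiff.mp h2).1
  have hbΔ : n2sq (proj (T \ S) (proj S x - u)) + n2sq (proj (S \ T) (proj S x - u))
      ≤ c ^ 2 := by
    have hunion : n2sq (proj ((T \ S) ∪ (S \ T)) (proj S x - u))
        = n2sq (proj (T \ S) (proj S x - u)) + n2sq (proj (S \ T) (proj S x - u)) := by
      rw [n2sq_proj, n2sq_proj, n2sq_proj, Finset.sum_union hdisjTS]
    have hsub2 : (T \ S) ∪ (S \ T) ⊆ Ω :=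
      Finset.union_subset ((Finset.sdiff_subset).trans hTsub)
        ((Finset.sdiff_subset).trans hSsub)
    have h9 := hrest _ hsub2
    rw [← hunion, ← n2_sq]
    nlinarith [n2_nonneg (proj ((T \ S) ∪ (S \ T)) (proj S x - u))]
  have hST : n2sq (proj (S \ T) (proj S x)) ≤ 2 * c ^ 2 := by
    have hdecomp : proj (S \ T) (proj S x)
        = proj (S \ T) u + proj (S \ T) (proj S x - u) := by
      funext i
      by_cases h : i ∈ S \ T <;> simp [proj, Pi.add_apply, Pi.sub_apply, h]
    have h1 : n2 (proj (S \ T) (proj S x))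
        ≤ n2 (proj (S \ T) u) + n2 (proj (S \ T) (proj S x - u)) := by
      rw [hdecomp]; exact n2_add_le _ _
    have h2 : n2 (proj (S \ T) u) ≤ n2 (proj (T \ S) (proj S x - u)) := by
      have h10 := hcount
      rw [hTSu] at h10
      exact n2_mono h10
    have hab : n2 (proj (T \ S) (proj S x - u)) ^ 2
        + n2 (proj (S \ T) (proj S x - u)) ^ 2 ≤ c ^ 2 := by
      rw [n2_sq, n2_sq]; exact hbΔ
    have h4 : n2sq (proj (S \ T) (proj S x)) = n2 (proj (S \ T) (proj S x)) ^ 2 :=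
      (n2_sq _).symm
    have h3 : n2 (proj (S \ T) (proj S x))
        ≤ n2 (proj (T \ S) (proj S x - u)) + n2 (proj (S \ T) (proj S x - u)) := by
      linarith
    have h5 := mul_self_le_mul_self (n2_nonneg (proj (S \ T) (proj S x))) h3
    nlinarith [h5, hab, h4,
      sq_nonneg (n2 (proj (T \ S) (proj S x - u)) - n2 (proj (S \ T) (proj S x - u)))]
  have htotal : n2sq (proj S x - proj T u) ≤ 3 * c ^ 2 := by
    rw [hsplit]
    have hbT2 : n2sq (proj T (proj S x - u)) ≤ c ^ 2 := by
      rw [← n2_sq]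
      nlinarith [n2_nonneg (proj T (proj S x - u))]
    linarith
  have hfinal : n2 (proj S x - proj T u) ≤ Real.sqrt 3 * c := by
    calc n2 (proj S x - proj T u) = Real.sqrt (n2sq (proj S x - proj T u)) := rfl
      _ ≤ Real.sqrt (3 * c ^ 2) := Real.sqrt_le_sqrt htotal
      _ = Real.sqrt 3 * c := by
          rw [Real.sqrt_mul (by norm_num : (0:ℝ) ≤ 3), Real.sqrt_sq hc0]
  have hring : Real.sqrt 3 * c = Real.sqrt 3 * δ * n2 d + Real.sqrt 3 * (CA * n2 e') := by
    rw [hcdef]; ring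
  rw [hring] at hfinal
  exact hfinal

end Aux6

/-- IHTL main theorem, ℓ² bound: if `δ_{6s,M} < 1/√3`, then there exist
`E, F > 0` depending only on `δ_{6s,M}` such that for all `x`, `e`, the IHTL sequence with
sparsities `(2s,M)`, `y = Ax + e`, `x⁽⁰⁾ = 0` satisfies
`‖x − x⁽ⁿ⁾‖₂ ≤ (E/√ξ) σ_{s,M}(x)_{ℓ¹_w} + F‖e‖₂ + ρⁿ‖x‖₂`, `ρ = √3 δ_{6s,M}`. -/
theorem stmt11 {m N : ℕ} (r : ℕ) (M s : ℕ → ℕ) (hM : LevelsOK N r M) (hr : 0 < r)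
    (hs : ∀ k < r, 1 ≤ s k)
    (w : Fin N → ℝ) (wl : ℕ → ℝ) (hwpos : ∀ k < r, 0 < wl k)
    (hw : ∀ k < r, ∀ i ∈ level N M k, w i = wl k)
    (A : Matrix (Fin m) (Fin N) ℂ)
    (hA : ricl A r M (fun k => 6 * s k) < 1 / Real.sqrt 3) :
    Real.sqrt 3 * ricl A r M (fun k => 6 * s k) < 1 ∧
    ∃ E F : ℝ, 0 < E ∧ 0 < F ∧
      ∀ (x : Fin N → ℂ) (e : Fin m → ℂ) (X : ℕ → Fin N → ℂ),
        IHTLSeq A r M (fun k => 2 * s k) (A.mulVec x + e) X → X 0 = 0 →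
        ∀ n : ℕ,
          n2 (x - X n) ≤
            E / Real.sqrt (xiMin r s wl) * bestApprox r M s w x + F * n2 e +
              (Real.sqrt 3 * ricl A r M (fun k => 6 * s k)) ^ n * n2 x := by
  classical
  set δ : ℝ := ricl A r M (fun k => 6 * s k) with hδdef
  obtain ⟨hδ0, hrip⟩ := ricl_mem (A := A) (r := r) (M := M) (fun k => 6 * s k)
  have h3pos : (0:ℝ) < Real.sqrt 3 := Real.sqrt_pos.mpr (by norm_num)
  have hρ : Real.sqrt 3 * δ < 1 := by
    have h1 : Real.sqrt 3 * δ < Real.sqrt 3 * (1 / Real.sqrt 3) :=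
      mul_lt_mul_of_pos_left hA h3pos
    rwa [mul_one_div, div_self h3pos.ne'] at h1
  set ρ : ℝ := Real.sqrt 3 * δ with hρdef
  refine ⟨hρ, ?_⟩
  have hρ0 : 0 ≤ ρ := mul_nonneg (Real.sqrt_nonneg 3) hδ0
  set CA : ℝ := Real.sqrt (frobsq A) with hCAdef
  have hCA0 : 0 ≤ CA := Real.sqrt_nonneg _
  set K : ℝ := Real.sqrt 3 * (CA + 1) / (1 - ρ) with hKdef
  have hK0 : 0 < K := by
    apply div_pos
    · exact mul_pos h3pos (by linarith)
    · linarith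
  have hKid : K * (1 - ρ) = Real.sqrt 3 * (CA + 1) := by
    have hne : (1:ℝ) - ρ ≠ 0 := by linarith
    rw [hKdef, div_mul_cancel₀ _ hne]
  refine ⟨1 + K * (CA + 1), K, ?_, hK0, ?_⟩
  · have h2 : 0 < K * (CA + 1) := mul_pos hK0 (by linarith)
    linarith
  intro x e X hseq hX0 n
  obtain ⟨S, hScard, hbest0, hstech⟩ := exists_S hM hr hs w wl hwpos hw x
  set ξr : ℝ := Real.sqrt (xiMin r s wl) with hξrdef
  have hξr : 0 < ξr := Real.sqrt_pos.mpr (xiMin_pos hr hs hwpos)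
  set σβ : ℝ := bestApprox r M s w x with hσβdef
  set e' : Fin m → ℂ := A.mulVec (x - proj S x) + e with he'def
  have he'b : n2 e' ≤ CA * (σβ / ξr) + n2 e := by
    rw [he'def]
    refine (n2_add_le _ _).trans ?_
    have h1 : n2 (A.mulVec (x - proj S x)) ≤ CA * n2 (x - proj S x) := n2_mulVec_le _ _
    have h2 : CA * n2 (x - proj S x) ≤ CA * (σβ / ξr) :=
      mul_le_mul_of_nonneg_left hstech hCA0
    linarith
  have main : ∀ n, Sparse r M (fun k => 2 * s k) (X n) ∧
      n2 (proj S x - X n) ≤ ρ ^ n * n2 (proj S x) + K * n2 e' := by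
    intro n
    induction n with
    | zero =>
      constructor
      · rw [hX0]; exact sparse_zero
      · rw [hX0, pow_zero, one_mul, sub_zero]
        have h3 : 0 ≤ K * n2 e' := mul_nonneg hK0.le (n2_nonneg _)
        linarith
    | succ n ih =>
      obtain ⟨hsp, hb⟩ := ih
      obtain ⟨T, hT, hXn1⟩ := hseq n
      have hTs : SparseSet N r M (fun k => 2 * s k) T := by
        intro k hk
        show (T ∩ level N M k).card ≤ 2 * s k
        have h5 : (T ∩ level N M k).card = min (2 * s k) (level N M k).card := hT.1 k hk
        omega
      constructor
      · rw [hXn1]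
        exact sparse_of_supp_subset hTs (supp_proj_subset _ _)
      · rw [hXn1]
        have hit := iter_core hM hr hrip hδ0 hScard x e hsp hT
        have h6 : ρ * K + Real.sqrt 3 * CA ≤ K := by
          nlinarith [hKid, Real.sqrt_nonneg 3]
        calc n2 (proj S x - proj T (X n + A.conjTranspose.mulVec
              (A.mulVec x + e - A.mulVec (X n))))
            ≤ ρ * n2 (proj S x - X n) + Real.sqrt 3 * (CA * n2 e') := hit
          _ ≤ ρ * (ρ ^ n * n2 (proj S x) + K * n2 e') + Real.sqrt 3 * (CA * n2 e') := by
              have h7 := mul_le_mul_of_nonneg_left hb hρ0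
              linarith
          _ = ρ ^ (n + 1) * n2 (proj S x) + (ρ * K + Real.sqrt 3 * CA) * n2 e' := by
              ring
          _ ≤ ρ ^ (n + 1) * n2 (proj S x) + K * n2 e' := by
              have h8 := mul_le_mul_of_nonneg_right h6 (n2_nonneg e')
              linarith
  have ha := n2_sub_le x (proj S x) (X n)
  have hmain := (main n).2
  have hpow : (0:ℝ) ≤ ρ ^ n := pow_nonneg hρ0 n
  have hprle : ρ ^ n * n2 (proj S x) ≤ ρ ^ n * n2 x :=
    mul_le_mul_of_nonneg_left (n2_proj_le S x) hpow
  have hKe : K * n2 e' ≤ K * (CA * (σβ / ξr) + n2 e) :=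
    mul_le_mul_of_nonneg_left he'b hK0.le
  have hσξ : 0 ≤ σβ / ξr := div_nonneg hbest0 hξr.le
  have hKσ : 0 ≤ K * (σβ / ξr) := mul_nonneg hK0.le hσξ
  have hgoal : (1 + K * (CA + 1)) / ξr * σβ
      = σβ / ξr + K * (CA * (σβ / ξr)) + K * (σβ / ξr) := by
    field_simp
    ring
  linarith [hstech, ha, hmain, hprle, hKe, hKσ, hgoal.ge, hgoal.le]


end SIL
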